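/- If x₀ is T-periodic and b(T) ≠ 1, then the covector v₁(t) := (1/b(t))·(−α(t) f⊥(x₀(t)) + β(t) f(x₀(t))) is a T-periodic function of t: v₁(t + T) = v₁(t) for all t. -/

import Mathlib

open Matrix

noncomputable section

/-- The perpendicular vector field on ℝ²: `(v₁, v₂) ↦ (v₂, −v₁)`. -/
def perp (v : Fin 2 → ℝ) : Fin 2 → ℝ := ![v 1, -v 0]

/-- The Jacobian matrix of `f : ℝ² → ℝ²` at a point `x`: entry `(i, j)` is `∂fᵢ/∂xⱼ (x)`. -/
def jac (f : (Fin 2 → ℝ) → (Fin 2 → ℝ)) (x : Fin 2 → ℝ) : Matrix (Fin 2) (Fin 2) ℝ :=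
  Matrix.of fun i j => fderiv ℝ f x (Pi.single j 1) i

/-- The divergence of `f : ℝ² → ℝ²`, i.e. the trace of its Jacobian. -/
def divg (f : (Fin 2 → ℝ) → (Fin 2 → ℝ)) (x : Fin 2 → ℝ) : ℝ := (jac f x).trace

/-- Diliberto's function `b(t) = exp(∫₀ᵗ (div f)(x₀ s) ds)`. -/
def bD (f : (Fin 2 → ℝ) → (Fin 2 → ℝ)) (x₀ : ℝ → (Fin 2 → ℝ)) (t : ℝ) : ℝ :=
  Real.exp (∫ s in (0:ℝ)..t, divg f (x₀ s))

/-- Diliberto's function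
`a(t) = ∫₀ᵗ [f(x₀ s)ᵀ (A s + (A s)ᵀ) f⊥(x₀ s) / ‖f(x₀ s)‖⁴] b(s) ds`
(here `‖v‖² = v ⬝ᵥ v` is the square of the euclidean norm). -/
def aD (f : (Fin 2 → ℝ) → (Fin 2 → ℝ)) (x₀ : ℝ → (Fin 2 → ℝ)) (t : ℝ) : ℝ :=
  ∫ s in (0:ℝ)..t,
    (f (x₀ s) ⬝ᵥ ((jac f (x₀ s) + (jac f (x₀ s))ᵀ).mulVec (perp (f (x₀ s)))) /
      (f (x₀ s) ⬝ᵥ f (x₀ s)) ^ 2) * bD f x₀ s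

/-- The second Floquet exponent `μ₂ = (1/T) ∫₀ᵀ (div f)(x₀ s) ds`. -/
def mu2D (f : (Fin 2 → ℝ) → (Fin 2 → ℝ)) (x₀ : ℝ → (Fin 2 → ℝ)) (T : ℝ) : ℝ :=
  (1 / T) * ∫ s in (0:ℝ)..T, divg f (x₀ s)

/-- `α(t) = a(T)/(b(T) − 1) + a(t)`. -/
def alphaD (f : (Fin 2 → ℝ) → (Fin 2 → ℝ)) (x₀ : ℝ → (Fin 2 → ℝ)) (T t : ℝ) : ℝ :=
  aD f x₀ T / (bD f x₀ T - 1) + aD f x₀ t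

/-- `β(t) = b(t)/‖f(x₀ t)‖²` (with `‖v‖² = v ⬝ᵥ v`). -/
def betaD (f : (Fin 2 → ℝ) → (Fin 2 → ℝ)) (x₀ : ℝ → (Fin 2 → ℝ)) (t : ℝ) : ℝ :=
  bD f x₀ t / (f (x₀ t) ⬝ᵥ f (x₀ t))

/-- First Floquet eigenvector `u₁(t) = f(x₀ t)`. -/
def u1D (f : (Fin 2 → ℝ) → (Fin 2 → ℝ)) (x₀ : ℝ → (Fin 2 → ℝ)) (t : ℝ) : Fin 2 → ℝ :=
  f (x₀ t)

/-- Second Floquet eigenvector `u₂(t) = e^{−μ₂ t} (α(t) f(x₀ t) + β(t) f⊥(x₀ t))`. -/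
def u2D (f : (Fin 2 → ℝ) → (Fin 2 → ℝ)) (x₀ : ℝ → (Fin 2 → ℝ)) (T t : ℝ) : Fin 2 → ℝ :=
  Real.exp (-(mu2D f x₀ T) * t) •
    (alphaD f x₀ T t • f (x₀ t) + betaD f x₀ t • perp (f (x₀ t)))

/-- First covector `v₁(t) = (1/b(t)) (−α(t) f⊥(x₀ t) + β(t) f(x₀ t))`. -/
def v1D (f : (Fin 2 → ℝ) → (Fin 2 → ℝ)) (x₀ : ℝ → (Fin 2 → ℝ)) (T t : ℝ) : Fin 2 → ℝ :=
  (1 / bD f x₀ t) •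
    ((-(alphaD f x₀ T t)) • perp (f (x₀ t)) + betaD f x₀ t • f (x₀ t))

/-- Second covector `v₂(t) = (e^{μ₂ t}/b(t)) f⊥(x₀ t)`. -/
def v2D (f : (Fin 2 → ℝ) → (Fin 2 → ℝ)) (x₀ : ℝ → (Fin 2 → ℝ)) (T t : ℝ) : Fin 2 → ℝ :=
  (Real.exp (mu2D f x₀ T * t) / bD f x₀ t) • perp (f (x₀ t))

/-! Since the divergence along the periodic orbit is `T`-periodic, `b(t + T) = b(T) b(t)`; the
integrand of `a` picks up the same factor, so `a(t + T) = a(T) + b(T) a(t)`. The constant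
`a(T)/(b(T) − 1)` in `α` is the one for which `α(t + T) = b(T) α(t)`, and `β` also scales by `b(T)`,
so both coefficients of `v₁` are divided by `b(t + T) = b(T) b(t)` and the factor `b(T)` cancels. -/

theorem intervalIntegral_add_period_of_smul {E : Type*} [NormedAddCommGroup E] [NormedSpace ℝ E]
    {g : ℝ → E} {T c : ℝ} (hg : Continuous g) (hgT : ∀ s, g (s + T) = c • g s) (t : ℝ) :
    ∫ s in (0 : ℝ)..t + T, g s = (∫ s in (0 : ℝ)..T, g s) + c • ∫ s in (0 : ℝ)..t, g s := by
  rw [← intervalIntegral.integral_add_adjacent_intervals (hg.intervalIntegrable 0 T)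
    (hg.intervalIntegrable T (t + T))]
  congr 1
  calc ∫ s in T..t + T, g s = ∫ s in (0 : ℝ)..t, g (s + T) := by
        rw [intervalIntegral.integral_comp_add_right, zero_add]
    _ = c • ∫ s in (0 : ℝ)..t, g s := by
        simp only [hgT, intervalIntegral.integral_smul]

theorem continuous_perp : Continuous perp :=
  (continuous_apply 1).matrixVecCons ((continuous_apply 0).neg.matrixVecCons continuous_const)

section AlongOrbit

variable {f : (Fin 2 → ℝ) → (Fin 2 → ℝ)} {x₀ : ℝ → (Fin 2 → ℝ)} {T : ℝ}

theorem continuous_jac_comp (hf : ContDiff ℝ 1 f) (hx : Continuous x₀) :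
    Continuous fun s => jac f (x₀ s) := by
  refine continuous_pi fun i => continuous_pi fun j => ?_
  exact (continuous_apply i).comp (((hf.continuous_fderiv one_ne_zero).comp hx).clm_apply
    continuous_const)

theorem bD_add_period (hf : ContDiff ℝ 1 f) (hx : Continuous x₀)
    (hper : ∀ t, x₀ (t + T) = x₀ t) (t : ℝ) :
    bD f x₀ (t + T) = bD f x₀ T * bD f x₀ t := by
  have hdiv : Continuous fun s => divg f (x₀ s) := (continuous_jac_comp hf hx).matrix_trace
  rw [bD, intervalIntegral_add_period_of_smul hdiv (fun s => by rw [hper, one_smul]), one_smul,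
    Real.exp_add, bD, bD]

theorem continuous_bD (hf : ContDiff ℝ 1 f) (hx : Continuous x₀) : Continuous (bD f x₀) :=
  Real.continuous_exp.comp (intervalIntegral.continuous_primitive
    (fun a b => (continuous_jac_comp hf hx).matrix_trace.intervalIntegrable a b) 0)

theorem aD_add_period (hf : ContDiff ℝ 1 f) (hx : Continuous x₀) (hfne : ∀ t, f (x₀ t) ≠ 0)
    (hper : ∀ t, x₀ (t + T) = x₀ t) (t : ℝ) :
    aD f x₀ (t + T) = aD f x₀ T + bD f x₀ T * aD f x₀ t := by
  have hfx : Continuous fun s => f (x₀ s) := hf.continuous.comp hx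
  have hA := continuous_jac_comp hf hx
  have hg : Continuous fun s =>
      (f (x₀ s) ⬝ᵥ ((jac f (x₀ s) + (jac f (x₀ s))ᵀ).mulVec (perp (f (x₀ s)))) /
        (f (x₀ s) ⬝ᵥ f (x₀ s)) ^ 2) * bD f x₀ s := by
    refine (Continuous.div ?_ ((hfx.dotProduct hfx).pow 2) fun s => ?_).mul
      (continuous_bD hf hx)
    · exact hfx.dotProduct ((hA.add hA.matrix_transpose).matrix_mulVec
        (continuous_perp.comp hfx))
    · exact pow_ne_zero 2 (dotProduct_self_eq_zero.not.mpr (hfne s))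
  refine intervalIntegral_add_period_of_smul hg (fun s => ?_) t
  rw [hper, bD_add_period hf hx hper, smul_eq_mul]
  ring

theorem alphaD_add_period (hf : ContDiff ℝ 1 f) (hx : Continuous x₀) (hfne : ∀ t, f (x₀ t) ≠ 0)
    (hper : ∀ t, x₀ (t + T) = x₀ t) (hbT : bD f x₀ T ≠ 1) (t : ℝ) :
    alphaD f x₀ T (t + T) = bD f x₀ T * alphaD f x₀ T t := by
  have hb1 : bD f x₀ T - 1 ≠ 0 := sub_ne_zero.mpr hbT
  rw [alphaD, alphaD, aD_add_period hf hx hfne hper]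
  field_simp
  ring

theorem betaD_add_period (hf : ContDiff ℝ 1 f) (hx : Continuous x₀)
    (hper : ∀ t, x₀ (t + T) = x₀ t) (t : ℝ) :
    betaD f x₀ (t + T) = bD f x₀ T * betaD f x₀ t := by
  rw [betaD, betaD, bD_add_period hf hx hper, hper, mul_div_assoc]

end AlongOrbit

theorem v1_periodic_general
    (f : (Fin 2 → ℝ) → (Fin 2 → ℝ)) (x₀ : ℝ → (Fin 2 → ℝ)) (T : ℝ)
    (hf : ContDiff ℝ 1 f)
    (hx : ∀ t, HasDerivAt x₀ (f (x₀ t)) t)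
    (hfne : ∀ t, f (x₀ t) ≠ 0)
    (hper : ∀ t, x₀ (t + T) = x₀ t)
    (hbT : bD f x₀ T ≠ 1) :
    ∀ t, v1D f x₀ T (t + T) = v1D f x₀ T t := by
  intro t
  have hxc : Continuous x₀ := continuous_iff_continuousAt.2 fun t => (hx t).continuousAt
  have hbT₀ : bD f x₀ T ≠ 0 := (Real.exp_pos _).ne'
  rw [v1D, v1D, alphaD_add_period hf hxc hfne hper hbT, betaD_add_period hf hxc hper,
    bD_add_period hf hxc hper, hper, ← mul_neg, mul_smul, mul_smul, ← smul_add, smul_smul]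
  congr 1
  field_simp

/-- If `x₀` is `T`-periodic and `b(T) ≠ 1`, then the covector
`v₁` is a `T`-periodic function of `t`. -/
theorem v1_periodic
    (f : (Fin 2 → ℝ) → (Fin 2 → ℝ)) (x₀ : ℝ → (Fin 2 → ℝ)) (T : ℝ)
    (hf : ContDiff ℝ 1 f)
    (hx : ∀ t, HasDerivAt x₀ (f (x₀ t)) t)
    (hfne : ∀ t, f (x₀ t) ≠ 0)
    (hT : 0 < T)
    (hper : ∀ t, x₀ (t + T) = x₀ t)
    (hbT : bD f x₀ T ≠ 1) :
    ∀ t, v1D f x₀ T (t + T) = v1D f x₀ T t :=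
  v1_periodic_general f x₀ T hf hx hfne hper hbT

end
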